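/- arXiv:1609.06199 — 7 statements merged into one kernel-verified Lean document; each statement's English description precedes it below -/
import Mathlib

section
/- Let d ≥ 1, D = 2d+2, and define ι : ℤ → ℤ by ι(i) = i + ⌈(i-d)/(D-1)⌉. Then for all x, y ∈ ℤ, ⌊|ι(x) - ι(y)|/D⌋ = ⌊|x - y|/(D-1)⌋. -/
/-!
The map `ι` is strictly increasing and satisfies `ι (i + m) = ι i + (m + 1)` with `m = 2d + 1`.
Any such map sends `y + q m + r` with `0 ≤ r < m` to `ι y + q (m + 1) + s` with `0 ≤ s ≤ m`,
since `ι y ≤ ι (y + r) < ι (y + m)`; hence `⌊(ι x - ι y) / (m + 1)⌋ = ⌊(x - y) / m⌋` for all `x, y`,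
and `ι x - ι y` has the sign of `x - y`.
-/

namespace Int

variable {f : ℤ → ℤ} {m : ℤ}

theorem map_add_mul_of_map_add (hf : ∀ i, f (i + m) = f i + (m + 1)) (i q : ℤ) :
    f (i + m * q) = f i + (m + 1) * q := by
  induction q using Int.induction_on with
  | zero => simp
  | succ n ih => rw [mul_add_one, ← add_assoc, hf, ih]; ring
  | pred n ih =>
    have h := hf (i + m * (-n - 1))
    rw [show i + m * (-n - 1) + m = i + m * -n by ring, ih] at h
    linear_combination -h

theorem sub_ediv_succ_of_strictMono_of_map_add (hf : StrictMono f)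
    (hfm : ∀ i, f (i + m) = f i + (m + 1)) (hm : 0 < m) (x y : ℤ) :
    (f x - f y) / (m + 1) = (x - y) / m := by
  set q := (x - y) / m
  set r := (x - y) % m
  have hr0 : 0 ≤ r := Int.emod_nonneg _ hm.ne'
  have hrm : r < m := Int.emod_lt_of_pos _ hm
  have hfx : f x - f y = (f (y + r) - f y) + (m + 1) * q := by
    rw [show x = (y + r) + m * q by linear_combination (-1 : ℤ) * Int.emod_add_mul_ediv (x - y) m,
      map_add_mul_of_map_add hfm]
    ring
  have hlow : f y ≤ f (y + r) := hf.monotone (by omega)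
  have hup : f (y + r) < f y + (m + 1) := hfm y ▸ hf (by omega)
  rw [hfx, Int.add_mul_ediv_left _ _ (by omega), Int.ediv_eq_zero_of_lt (by omega) (by omega),
    zero_add]

theorem abs_sub_ediv_succ_of_strictMono_of_map_add (hf : StrictMono f)
    (hfm : ∀ i, f (i + m) = f i + (m + 1)) (hm : 0 < m) (x y : ℤ) :
    |f x - f y| / (m + 1) = |x - y| / m := by
  rcases le_total y x with hxy | hxy
  · rw [abs_of_nonneg (sub_nonneg.2 (hf.monotone hxy)), abs_of_nonneg (sub_nonneg.2 hxy),
      sub_ediv_succ_of_strictMono_of_map_add hf hfm hm]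
  · rw [abs_of_nonpos (sub_nonpos.2 (hf.monotone hxy)), abs_of_nonpos (sub_nonpos.2 hxy),
      neg_sub, neg_sub, sub_ediv_succ_of_strictMono_of_map_add hf hfm hm]

end Int

section CeilShift

variable {c : ℚ} {m : ℤ}

theorem strictMono_add_ceil_sub_div (hm : 0 < m) :
    StrictMono fun i : ℤ ↦ i + ⌈((i : ℚ) - c) / m⌉ := by
  refine strictMono_int_of_lt_succ fun i ↦ ?_
  have : ⌈((i : ℚ) - c) / m⌉ ≤ ⌈(((i + 1 : ℤ) : ℚ) - c) / m⌉ :=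
    Int.ceil_mono (div_le_div_of_nonneg_right (by push_cast; linarith) (by exact_mod_cast hm.le))
  omega

theorem add_ceil_sub_div_add (hm : 0 < m) (i : ℤ) :
    i + m + ⌈(((i + m : ℤ) : ℚ) - c) / m⌉ = i + ⌈((i : ℚ) - c) / m⌉ + (m + 1) := by
  have hm' : (m : ℚ) ≠ 0 := by exact_mod_cast hm.ne'
  rw [show (((i + m : ℤ) : ℚ) - c) / m = ((i : ℚ) - c) / m + 1 by field_simp; push_cast; ring,
    Int.ceil_add_one]
  ring

end CeilShift

theorem stmt_3 (d : ℤ) (hd : 1 ≤ d) (ι : ℤ → ℤ)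
    (hι : ∀ i : ℤ, ι i = i + ⌈((i : ℚ) - (d : ℚ)) / (2 * (d : ℚ) + 1)⌉)
    (x y : ℤ) :
    |ι x - ι y| / (2 * d + 2) = |x - y| / (2 * d + 1) := by
  have hm : 0 < 2 * d + 1 := by omega
  have hι' : ι = fun i : ℤ ↦ i + ⌈((i : ℚ) - d) / ((2 * d + 1 : ℤ) : ℚ)⌉ := by
    funext i; rw [hι]; push_cast; rfl
  subst hι'
  rw [show 2 * d + 2 = 2 * d + 1 + 1 by ring]
  exact Int.abs_sub_ediv_succ_of_strictMono_of_map_add (strictMono_add_ceil_sub_div hm)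
    (add_ceil_sub_div_add hm) hm x y
end

section
/- Let a, t ∈ ℕ with t ≤ a. In ℤ[v], the sum over all pairs (x, y) of natural numbers with x + y = t of qbinom(a, x) · qbinom(a - x, y) · v^{x(x+1) + 2x(a-t)} equals qbinom(a, t) · ∏_{i=1}^{t} (1 + v^{2(a-t+i)}), where qbinom denotes the Gaussian binomial coefficient in base v² (with quantum integer [m] = 1 + v² + ... + v^{2(m-1)}). -/
open Polynomial

/-- The quantum integer `[m] = 1 + v² + ⋯ + v^{2(m-1)}` as a polynomial in `v`. -/
noncomputable def qint (m : ℕ) : Polynomial ℤ := ∑ k ∈ Finset.range m, X ^ (2 * k)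

/-- The quantum factorial `[m]! = [m][m-1]⋯[1]`. -/
noncomputable def qfac : ℕ → Polynomial ℤ
  | 0 => 1
  | m + 1 => qfac m * qint (m + 1)

open Finset

/-!
Cancelling quantum factorials gives `qbinom(a,x)·qbinom(a-x,t-x) = qbinom(a,t)·qbinom(t,x)`, so the
left side is `qbinom(a,t)` times `∑_x qbinom(t,x) v^{x(x-1)} z^x` with `z = v^{2(a-t+1)}`, which the
quantum binomial theorem turns into the product. The factorial identity determines `qbinom n r` only
for `r ≤ n`; comparing it with the Gaussian binomial defined by q-Pascal, which vanishes for `r > n`,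
keeps the induction for the binomial theorem free of boundary terms.
-/

lemma qint_add (p q : ℕ) : qint (p + q) = qint p + X ^ (2 * p) * qint q := by
  simp only [qint, sum_range_add, mul_sum, ← pow_add, mul_add]

@[simp] lemma qfac_zero : qfac 0 = 1 := rfl

lemma qfac_succ (m : ℕ) : qfac (m + 1) = qfac m * qint (m + 1) := rfl

lemma qfac_eval_one (m : ℕ) : (qfac m).eval 1 = m.factorial := by
  induction m with
  | zero => simp [qfac]
  | succ m ih => simp [qfac, qint, eval_finsetSum, ih, Nat.factorial_succ, mul_comm]

lemma qfac_ne_zero (m : ℕ) : qfac m ≠ 0 := fun h => by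
  simpa [qfac_eval_one, Nat.factorial_ne_zero] using congrArg (eval 1) h

lemma Nat.mul_sub_one_add_two_mul (r : ℕ) : r * (r - 1) + 2 * r = (r + 1) * r := by
  cases r with
  | zero => rfl
  | succ r => rw [Nat.add_sub_cancel]; ring

noncomputable def gaussBinom : ℕ → ℕ → ℤ[X]
  | _, 0 => 1
  | 0, _ + 1 => 0
  | n + 1, r + 1 => X ^ (2 * (r + 1)) * gaussBinom n (r + 1) + gaussBinom n r

@[simp] lemma gaussBinom_zero_right (n : ℕ) : gaussBinom n 0 = 1 := by
  cases n <;> rfl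

lemma gaussBinom_succ_succ (n r : ℕ) :
    gaussBinom (n + 1) (r + 1) = X ^ (2 * (r + 1)) * gaussBinom n (r + 1) + gaussBinom n r :=
  rfl

lemma gaussBinom_eq_zero_of_lt {n r : ℕ} (h : n < r) : gaussBinom n r = 0 := by
  induction n generalizing r with
  | zero => obtain ⟨r, rfl⟩ := Nat.exists_eq_succ_of_ne_zero h.ne'; rfl
  | succ n ih =>
    obtain ⟨r, rfl⟩ := Nat.exists_eq_succ_of_ne_zero (by omega : r ≠ 0)
    rw [gaussBinom_succ_succ, ih (by omega), ih (by omega), mul_zero, add_zero]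

lemma gaussBinom_mul_qfac_mul_qfac {n r : ℕ} (h : r ≤ n) :
    gaussBinom n r * qfac r * qfac (n - r) = qfac n := by
  induction n generalizing r with
  | zero => obtain rfl := Nat.le_zero.mp h; simp [qfac]
  | succ n ih =>
    cases r with
    | zero => simp [qfac]
    | succ r =>
      rcases (Nat.succ_le_succ_iff.mp h).lt_or_eq with hr | rfl
      · obtain ⟨m, rfl⟩ := Nat.exists_eq_add_of_lt hr
        have h1 := ih (r := r + 1) (by omega)
        have h0 := ih (r := r) (by omega)
        rw [show r + m + 1 - (r + 1) = m by omega] at h1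
        rw [show r + m + 1 - r = m + 1 by omega] at h0
        rw [show r + m + 1 + 1 - (r + 1) = m + 1 by omega, gaussBinom_succ_succ]
        have hint : qint (r + m + 1 + 1) = qint (r + 1) + X ^ (2 * (r + 1)) * qint (m + 1) := by
          rw [← qint_add]; congr 1; omega
        linear_combination X ^ (2 * (r + 1)) * qint (m + 1) * h1 + qint (r + 1) * h0
          + X ^ (2 * (r + 1)) * gaussBinom (r + m + 1) (r + 1) * qfac (r + 1) * qfac_succ m
          + gaussBinom (r + m + 1) r * qfac (m + 1) * qfac_succ r
          - qfac_succ (r + m + 1) - qfac (r + m + 1) * hint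
      · have hdiag := ih (le_refl r)
        rw [Nat.sub_self, qfac_zero, mul_one] at hdiag
        rw [gaussBinom_succ_succ, gaussBinom_eq_zero_of_lt (Nat.lt_succ_self r), Nat.sub_self,
          qfac_zero, mul_one, mul_zero, zero_add, qfac_succ, ← mul_assoc, hdiag]

lemma eq_gaussBinom_of_mul_qfac_mul_qfac {f : ℕ → ℕ → ℤ[X]}
    (hf : ∀ n r : ℕ, r ≤ n → f n r * qfac r * qfac (n - r) = qfac n) {n r : ℕ} (h : r ≤ n) :
    f n r = gaussBinom n r := by
  refine mul_right_cancel₀ (mul_ne_zero (qfac_ne_zero r) (qfac_ne_zero (n - r))) ?_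
  rw [← mul_assoc, ← mul_assoc, hf n r h, gaussBinom_mul_qfac_mul_qfac h]

lemma gaussBinom_mul_gaussBinom {a t x : ℕ} (hx : x ≤ t) (ht : t ≤ a) :
    gaussBinom a x * gaussBinom (a - x) (t - x) = gaussBinom a t * gaussBinom t x := by
  refine mul_right_cancel₀ (mul_ne_zero (mul_ne_zero (qfac_ne_zero x)
    (qfac_ne_zero (t - x))) (qfac_ne_zero (a - t))) ?_
  have h1 := gaussBinom_mul_qfac_mul_qfac (hx.trans ht)
  have h2 := gaussBinom_mul_qfac_mul_qfac (show t - x ≤ a - x by omega)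
  have h3 := gaussBinom_mul_qfac_mul_qfac ht
  have h4 := gaussBinom_mul_qfac_mul_qfac hx
  rw [show a - x - (t - x) = a - t by omega] at h2
  linear_combination h1 - h3 + gaussBinom a x * qfac x * h2 - gaussBinom a t * qfac (a - t) * h4

theorem sum_gaussBinom_mul_eq_prod (n : ℕ) (z : ℤ[X]) :
    ∑ r ∈ range (n + 1), gaussBinom n r * X ^ (r * (r - 1)) * z ^ r
      = ∏ k ∈ range n, (1 + X ^ (2 * k) * z) := by
  induction n generalizing z with
  | zero => simp
  | succ n ih =>
    set S := fun r => gaussBinom n r * X ^ (r * (r - 1)) * (X ^ 2 * z) ^ r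
    have hprod : ∏ k ∈ range (n + 1), (1 + X ^ (2 * k) * z)
        = (∏ k ∈ range n, (1 + X ^ (2 * k) * (X ^ 2 * z))) * (1 + z) := by
      rw [prod_range_succ']
      simp only [mul_zero, pow_zero, one_mul, mul_add, pow_add, mul_one, ← mul_assoc]
    calc ∑ r ∈ range (n + 1 + 1), gaussBinom (n + 1) r * X ^ (r * (r - 1)) * z ^ r
        = ∑ r ∈ range (n + 1), (S (r + 1) + z * S r) + 1 := by
          rw [sum_range_succ', gaussBinom_zero_right]
          congr 1
          · refine sum_congr rfl fun r _ => ?_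
            simp only [S, gaussBinom_succ_succ, Nat.add_sub_cancel, ← Nat.mul_sub_one_add_two_mul r]
            ring
          · simp
      _ = ∑ r ∈ range (n + 1 + 1), S r + z * ∑ r ∈ range (n + 1), S r := by
          rw [sum_add_distrib, ← mul_sum, sum_range_succ' S (n + 1)]
          simp only [add_tsub_cancel_right, gaussBinom_zero_right, zero_tsub, mul_zero, pow_zero,
            mul_one, S]
          ring
      _ = (∑ r ∈ range (n + 1), S r) * (1 + z) := by
          have hlast : S (n + 1) = 0 := by simp [S, gaussBinom_eq_zero_of_lt]
          rw [sum_range_succ S (n + 1), hlast]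
          ring
      _ = _ := by rw [ih, hprod]

/-- `∑_{x+y=t} qbinom(a,x)·qbinom(a-x,y)·v^{x(x+1)+2x(a-t)}
      = qbinom(a,t) · ∏_{i=1}^{t} (1 + v^{2(a-t+i)})` in `ℤ[v]`,
where the Gaussian binomial `qbinom` is characterized by
`qbinom(n,r)·[r]!·[n-r]! = [n]!` for `r ≤ n`. -/
theorem stmt_5 (qbinom : ℕ → ℕ → Polynomial ℤ)
    (hq : ∀ n r : ℕ, r ≤ n → qbinom n r * qfac r * qfac (n - r) = qfac n)
    (a t : ℕ) (hta : t ≤ a) :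
    ∑ x ∈ Finset.range (t + 1),
        qbinom a x * qbinom (a - x) (t - x) * X ^ (x * (x + 1) + 2 * x * (a - t))
      = qbinom a t * ∏ i ∈ Finset.range t, (1 + (X : Polynomial ℤ) ^ (2 * (a - t + (i + 1)))) := by
  have hterm : ∀ x ∈ range (t + 1),
      qbinom a x * qbinom (a - x) (t - x) * X ^ (x * (x + 1) + 2 * x * (a - t))
        = qbinom a t * (gaussBinom t x * X ^ (x * (x - 1)) * (X ^ (2 * (a - t + 1))) ^ x) := by
    intro x hx
    have hxt : x ≤ t := Nat.lt_succ_iff.mp (mem_range.mp hx)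
    rw [eq_gaussBinom_of_mul_qfac_mul_qfac hq (hxt.trans hta),
      eq_gaussBinom_of_mul_qfac_mul_qfac hq (show t - x ≤ a - x by omega),
      eq_gaussBinom_of_mul_qfac_mul_qfac hq hta, gaussBinom_mul_gaussBinom hxt hta, ← pow_mul,
      mul_assoc _ (X ^ _), ← pow_add, show x * (x - 1) + 2 * (a - t + 1) * x
        = x * (x + 1) + 2 * x * (a - t) by linarith [Nat.mul_sub_one_add_two_mul x]]
    ring
  rw [sum_congr rfl hterm, ← mul_sum, sum_gaussBinom_mul_eq_prod]
  congr 1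
  refine prod_congr rfl fun i _ => ?_
  rw [← pow_add]
  ring_nf
end

section
/- Let d ≥ 1. Let B_d denote the set of bijections g of {-d, ..., -1, 0, 1, ..., d} satisfying g(-i) = -g(i) for all i (signed permutations). For g ∈ B_d define inv(g) = #{(i,j) : 1 ≤ i < j ≤ d, g(i) > g(j)}, neg(g) = #{i : 1 ≤ i ≤ d, g(i) < 0}, nsp(g) = #{(i,j) : 1 ≤ i < j ≤ d, g(i) + g(j) < 0}, and inv_B(g) = inv(g) + neg(g) + nsp(g). Then ∑_{g ∈ B_d} q^{inv_B(g)} = ∏_{k=1}^{d} (1 + q + q² + ... + q^{2k-1}) in ℤ[q]. -/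
/-!
Encode a signed permutation `g` by its window `(g 1, …, g d)`: a word of nonzero integers whose
absolute values form a permutation of `1, …, d`, on which `inv_B` is read off directly. A window
of length `n + 1` arises in exactly one way by inserting the letter `n + 1` or `-(n + 1)` at some
position `k` into a window of length `n`. The letter `n + 1` is an inversion with the `n - k`
letters after it and adds nothing else; the letter `-(n + 1)` is an inversion with the `k` letters
before it, is negative, and has negative sum with all `n` other letters. So the inserted letter
contributes `q ^ (n - k)` or `q ^ (n + 1 + k)`, and these exponents run once through
`0, …, 2n + 1`. Induction on the length gives the product.
-/

open Polynomial

/-- The integer interval `[-d..d]` as a type. -/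
abbrev IccInt (d : ℕ) : Type := {x : ℤ // x ∈ Finset.Icc (-(d : ℤ)) (d : ℤ)}

open Finset

namespace Fin

variable {α : Type*} {n : ℕ}

lemma card_filter_castSucc_lt (k : Fin (n + 1)) : #{i : Fin n | i.castSucc < k} = k := by
  have := card_filter_val_lt (n := n) (m := k)
  simp only [lt_def, val_castSucc] at this ⊢
  omega

lemma card_filter_le_castSucc (k : Fin (n + 1)) : #{i : Fin n | k ≤ i.castSucc} = n - k := by
  have := card_filter_add_card_filter_not (s := univ) (fun i : Fin n => i.castSucc < k)
  simp only [not_lt, card_univ, Fintype.card_fin, card_filter_castSucc_lt] at this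
  omega

lemma card_filter_insertNth (P : α → Prop) [DecidablePred P] (k : Fin (n + 1)) (x : α)
    (w : Fin n → α) :
    #{i | P ((k.insertNth x w : Fin (n + 1) → α) i)} =
      #{i | P (w i)} + if P x then 1 else 0 := by
  rw [card_filter, card_filter, sum_univ_succAbove _ k]
  simp [add_comm]

lemma card_filter_lt_insertNth (P : α → α → Prop) [DecidableRel P] (k : Fin (n + 1)) (x : α)
    (w : Fin n → α) :
    #{p : Fin (n + 1) × Fin (n + 1) | p.1 < p.2 ∧
        P ((k.insertNth x w : Fin (n + 1) → α) p.1) ((k.insertNth x w : Fin (n + 1) → α) p.2)}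
      = #{p : Fin n × Fin n | p.1 < p.2 ∧ P (w p.1) (w p.2)}
        + #{i | i.castSucc < k ∧ P (w i) x} + #{j | k ≤ j.castSucc ∧ P x (w j)} := by
  simp only [card_filter, Fintype.sum_prod_type, sum_univ_succAbove _ k, insertNth_apply_same,
    insertNth_apply_succAbove, lt_irrefl, false_and, if_false, zero_add,
    succAbove_lt_succAbove_iff, lt_succAbove_iff_le_castSucc, succAbove_lt_iff_castSucc_lt,
    sum_add_distrib]
  ring

lemma comp_insertNth {β : Type*} (f : α → β) (k : Fin (n + 1)) (x : α) (w : Fin n → α) :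
    f ∘ (k.insertNth x w : Fin (n + 1) → α) = k.insertNth (f x) (f ∘ w) := by
  funext i
  induction i using succAboveCases k <;> simp

lemma injective_insertNth_iff {k : Fin (n + 1)} {x : α} {w : Fin n → α} :
    Function.Injective (k.insertNth x w : Fin (n + 1) → α) ↔
      x ∉ Set.range w ∧ Function.Injective w := by
  rw [← Function.Injective.of_comp_iff' _ k.cycleRange.symm.bijective,
    insertNth_comp_cycleRange_symm, cons_injective_iff]

end Fin

lemma Finset.card_filter_comp_of_injective {α β : Type*} [Fintype α] [Fintype β] {e : α → β}
    (he : Function.Injective e) (P : β → Prop) [DecidablePred P]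
    (hP : ∀ b, P b → b ∈ Set.range e) : #{a | P (e a)} = #{b | P b} :=
  card_bij (fun a _ => e a) (by simp) (fun _ _ _ _ h => he h) fun b hb => by
    obtain ⟨a, rfl⟩ := hP b (mem_filter.mp hb).2
    exact ⟨a, by simpa using hb, rfl⟩

namespace Hyperoctahedral

section Windows

variable {n : ℕ}

def invB (w : Fin n → ℤ) : ℕ :=
  #{p : Fin n × Fin n | p.1 < p.2 ∧ w p.2 < w p.1} + #{i | w i < 0}
    + #{p : Fin n × Fin n | p.1 < p.2 ∧ w p.1 + w p.2 < 0}

lemma invB_insertNth_of_eq (k : Fin (n + 1)) {w : Fin n → ℤ} (hw : ∀ i, |w i| ≤ n) :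
    invB (k.insertNth ((n : ℤ) + 1) w : Fin (n + 1) → ℤ) = invB w + (n - k) := by
  have hlt i : w i < (n : ℤ) + 1 := by have := abs_le.mp (hw i); omega
  have hgt i : ¬ (n : ℤ) + 1 < w i := by have := hlt i; omega
  have hsum i : ¬ w i + ((n : ℤ) + 1) < 0 := by have := abs_le.mp (hw i); omega
  have hsum' i : ¬ (n : ℤ) + 1 + w i < 0 := by have := hsum i; omega
  have hpos : ¬ (n : ℤ) + 1 < 0 := by omega
  simp only [invB, Fin.card_filter_lt_insertNth (fun a b : ℤ => b < a),
    Fin.card_filter_lt_insertNth (fun a b : ℤ => a + b < 0),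
    Fin.card_filter_insertNth (· < (0 : ℤ)), hlt, hgt, hsum, hsum', hpos, and_false, and_true,
    filter_false, card_empty, if_false, Fin.card_filter_le_castSucc]
  omega

lemma invB_insertNth_of_eq_neg (k : Fin (n + 1)) {w : Fin n → ℤ} (hw : ∀ i, |w i| ≤ n) :
    invB (k.insertNth (-((n : ℤ) + 1)) w : Fin (n + 1) → ℤ) = invB w + (n + 1 + k) := by
  have hgt i : -((n : ℤ) + 1) < w i := by have := abs_le.mp (hw i); omega
  have hlt i : ¬ w i < -((n : ℤ) + 1) := by have := hgt i; omega
  have hsum i : w i + -((n : ℤ) + 1) < 0 := by have := abs_le.mp (hw i); omega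
  have hsum' i : -((n : ℤ) + 1) + w i < 0 := by have := hsum i; omega
  have hneg : -((n : ℤ) + 1) < 0 := by omega
  simp only [invB, Fin.card_filter_lt_insertNth (fun a b : ℤ => b < a),
    Fin.card_filter_lt_insertNth (fun a b : ℤ => a + b < 0),
    Fin.card_filter_insertNth (· < (0 : ℤ)), hlt, hgt, hsum, hsum', hneg, and_false, and_true,
    filter_false, card_empty, if_true, Fin.card_filter_le_castSucc, Fin.card_filter_castSucc_lt]
  omega

noncomputable def signedWindows (n : ℕ) : Finset (Fin n → ℤ) :=
  {w ∈ Fintype.piFinset fun _ => Icc (-(n : ℤ)) n |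
    (∀ i, w i ≠ 0) ∧ Function.Injective fun i => |w i|}

lemma mem_signedWindows {w : Fin n → ℤ} :
    w ∈ signedWindows n ↔
      (∀ i, |w i| ≤ n) ∧ (∀ i, w i ≠ 0) ∧ Function.Injective fun i => |w i| := by
  simp only [signedWindows, mem_filter, Fintype.mem_piFinset, mem_Icc, ← abs_le]

lemma insertNth_mem_signedWindows (k : Fin (n + 1)) {x : ℤ} (hx : |x| = n + 1)
    {w : Fin n → ℤ} (hw : w ∈ signedWindows n) :
    (k.insertNth x w : Fin (n + 1) → ℤ) ∈ signedWindows (n + 1) := by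
  obtain ⟨hle, hne, hinj⟩ := mem_signedWindows.mp hw
  refine mem_signedWindows.mpr ⟨k.forall_iff_succAbove.mpr ⟨?_, ?_⟩,
    k.forall_iff_succAbove.mpr ⟨?_, ?_⟩, ?_⟩
  · simp [hx]
  · intro i
    simpa using (hle i).trans (by omega)
  · rw [Fin.insertNth_apply_same]
    rintro rfl
    rw [abs_zero] at hx
    omega
  · simpa using hne
  · change Function.Injective ((|·|) ∘ (k.insertNth x w : Fin (n + 1) → ℤ))
    rw [Fin.comp_insertNth, Fin.injective_insertNth_iff]
    refine ⟨fun ⟨i, hi⟩ => ?_, hinj⟩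
    have := hle i
    simp only [Function.comp_apply] at hi
    omega

lemma exists_abs_eq_succ {w : Fin (n + 1) → ℤ} (hw : w ∈ signedWindows (n + 1)) :
    ∃ k, |w k| = n + 1 := by
  obtain ⟨hle, hne, hinj⟩ := mem_signedWindows.mp hw
  have hsub : univ.image (fun i => |w i|) ⊆ Icc 1 ((n : ℤ) + 1) := by
    simp only [subset_iff, mem_image, mem_univ, true_and, mem_Icc, forall_exists_index]
    rintro _ i rfl
    exact ⟨Int.one_le_abs (hne i), by simpa using hle i⟩
  have himage := eq_of_subset_of_card_le hsub (by simp [card_image_of_injective _ hinj])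
  have hmem : (n : ℤ) + 1 ∈ univ.image (fun i => |w i|) :=
    himage ▸ right_mem_Icc.mpr (by omega)
  simpa using hmem

lemma removeNth_mem_signedWindows {w : Fin (n + 1) → ℤ} (hw : w ∈ signedWindows (n + 1))
    {k : Fin (n + 1)} (hk : |w k| = n + 1) : k.removeNth w ∈ signedWindows n := by
  obtain ⟨hle, hne, hinj⟩ := mem_signedWindows.mp hw
  refine mem_signedWindows.mpr
    ⟨fun i => ?_, fun i => hne _, hinj.comp Fin.succAbove_right_injective⟩
  have hne_k : |w (k.succAbove i)| ≠ n + 1 := fun h =>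
    Fin.succAbove_ne k i (hinj (h.trans hk.symm))
  have := hle (k.succAbove i)
  simp only [Fin.removeNth]
  push_cast at this hne_k
  omega

lemma sum_signedWindows_succ {M : Type*} [AddCommMonoid M] (f : (Fin (n + 1) → ℤ) → M) :
    ∑ w ∈ signedWindows (n + 1), f w =
      ∑ k : Fin (n + 1), ∑ x ∈ {(n : ℤ) + 1, -((n : ℤ) + 1)},
        ∑ w ∈ signedWindows n, f (k.insertNth x w) := by
  have hpm {x : ℤ} : x ∈ ({(n : ℤ) + 1, -((n : ℤ) + 1)} : Finset ℤ) ↔ |x| = n + 1 := by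
    rw [abs_eq (by omega), mem_insert, mem_singleton]
  simp_rw [← sum_product']
  symm
  refine sum_bij (fun p _ => p.1.insertNth p.2.1 p.2.2) ?_ ?_ ?_ fun _ _ => rfl
  · rintro ⟨k, x, w⟩ hp
    simp only [mem_product, mem_univ, true_and, hpm] at hp
    exact insertNth_mem_signedWindows k hp.1 hp.2
  · rintro ⟨k, x, w⟩ hp ⟨k', x', w'⟩ hp' h
    simp only [mem_product, mem_univ, true_and, hpm] at hp hp' h
    obtain ⟨-, -, hinj⟩ := mem_signedWindows.mp (insertNth_mem_signedWindows k hp.1 hp.2)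
    obtain rfl : k = k' := hinj (by simp [h, hp.1, hp'.1])
    obtain ⟨rfl, rfl⟩ := Fin.insertNth_inj.mp h
    rfl
  · intro w hw
    obtain ⟨k, hk⟩ := exists_abs_eq_succ hw
    refine ⟨(k, w k, k.removeNth w), ?_, Fin.insertNth_self_removeNth k w⟩
    simp only [mem_product, mem_univ, true_and, hpm]
    exact ⟨hk, removeNth_mem_signedWindows hw hk⟩

lemma sum_pow_sub_add_pow_add {R : Type*} [Semiring R] (a : R) (n : ℕ) :
    ∑ k : Fin (n + 1), (a ^ (n - k) + a ^ (n + 1 + k)) =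
      ∑ j ∈ range (2 * (n + 1)), a ^ j := by
  rw [sum_add_distrib, two_mul, sum_range_add, ← sum_range_reflect,
    Fin.sum_univ_eq_sum_range (fun k => a ^ (n - k)),
    Fin.sum_univ_eq_sum_range (fun k => a ^ (n + 1 + k))]
  simp

theorem sum_pow_invB_signedWindows {R : Type*} [CommSemiring R] (a : R) (n : ℕ) :
    ∑ w ∈ signedWindows n, a ^ invB w =
      ∏ k ∈ range n, ∑ j ∈ range (2 * (k + 1)), a ^ j := by
  induction n with
  | zero => simp [signedWindows, invB, Function.injective_of_subsingleton]
  | succ n ih =>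
    rw [sum_signedWindows_succ, prod_range_succ, ← ih, ← sum_pow_sub_add_pow_add, mul_sum]
    refine sum_congr rfl fun k _ => ?_
    rw [sum_pair (by omega), mul_add, sum_mul, sum_mul]
    congr 1 <;> refine sum_congr rfl fun w hw => ?_
    · rw [invB_insertNth_of_eq k (mem_signedWindows.mp hw).1, pow_add]
    · rw [invB_insertNth_of_eq_neg k (mem_signedWindows.mp hw).1, pow_add]

end Windows

section SignedPerm

variable {d : ℕ}

def IsSignedPerm (g : Equiv.Perm (IccInt d)) : Prop :=
  ∀ i j : IccInt d, (j : ℤ) = -(i : ℤ) → (g j : ℤ) = -(g i : ℤ)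

def posPoint (i : Fin d) : IccInt d := ⟨i + 1, by simp only [mem_Icc]; omega⟩

def negPoint (x : IccInt d) : IccInt d :=
  ⟨-x, by have := mem_Icc.mp x.2; simp only [mem_Icc]; omega⟩

lemma posPoint_injective : Function.Injective (posPoint (d := d)) := fun i j h =>
  Fin.ext (by simpa [posPoint] using congrArg Subtype.val h)

lemma mem_range_posPoint {x : IccInt d} (hx : 1 ≤ (x : ℤ)) : x ∈ Set.range posPoint :=
  ⟨⟨(x : ℤ).toNat - 1, by have := (mem_Icc.mp x.2).2; omega⟩,
    Subtype.ext (by simp only [posPoint]; omega)⟩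

def window (g : Equiv.Perm (IccInt d)) (i : Fin d) : ℤ := g (posPoint i)

lemma card_filter_one_le (P : IccInt d → Prop) [DecidablePred P] :
    #{x : IccInt d | 1 ≤ (x : ℤ) ∧ P x} = #{i : Fin d | P (posPoint i)} := by
  rw [← card_filter_comp_of_injective posPoint_injective _ fun x hx => mem_range_posPoint hx.1]
  congr 1
  exact filter_congr fun i _ => by simp [posPoint]

lemma card_filter_one_le_lt (P : IccInt d → IccInt d → Prop) [DecidableRel P] :
    #{p : IccInt d × IccInt d | 1 ≤ (p.1 : ℤ) ∧ (p.1 : ℤ) < p.2 ∧ P p.1 p.2} =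
      #{p : Fin d × Fin d | p.1 < p.2 ∧ P (posPoint p.1) (posPoint p.2)} := by
  rw [← card_filter_comp_of_injective (posPoint_injective.prodMap posPoint_injective) _
    fun p hp => ?_]
  · congr 1
    exact filter_congr fun p _ => by simp [posPoint]
  · obtain ⟨i, hi⟩ := mem_range_posPoint hp.1
    obtain ⟨j, hj⟩ := mem_range_posPoint (x := p.2) (by omega)
    exact ⟨(i, j), Prod.ext hi hj⟩

lemma invB_window (g : Equiv.Perm (IccInt d)) :
    #{p : IccInt d × IccInt d | 1 ≤ (p.1 : ℤ) ∧ (p.1 : ℤ) < p.2 ∧ (g p.2 : ℤ) < g p.1}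
      + #{i : IccInt d | 1 ≤ (i : ℤ) ∧ (g i : ℤ) < 0}
      + #{p : IccInt d × IccInt d |
          1 ≤ (p.1 : ℤ) ∧ (p.1 : ℤ) < p.2 ∧ (g p.1 : ℤ) + g p.2 < 0}
    = invB (window g) := by
  rw [card_filter_one_le_lt (fun a b => (g b : ℤ) < g a),
    card_filter_one_le_lt (fun a b => (g a : ℤ) + g b < 0),
    card_filter_one_le (fun a => (g a : ℤ) < 0)]
  rfl

def signedExtension (w : Fin d → ℤ) (x : ℤ) : ℤ :=
  x.sign * if h : x.natAbs - 1 < d then w ⟨x.natAbs - 1, h⟩ else 0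

lemma signedExtension_neg (w : Fin d → ℤ) (x : ℤ) :
    signedExtension w (-x) = -signedExtension w x := by
  simp only [signedExtension, Int.natAbs_neg, Int.sign_neg, neg_mul]

lemma signedExtension_posPoint (w : Fin d → ℤ) (i : Fin d) :
    signedExtension w (posPoint i) = w i := by
  have hsign : Int.sign ((i : ℤ) + 1) = 1 := Int.sign_eq_one_of_pos (by omega)
  have habs : ((i : ℤ) + 1).natAbs - 1 = i := by omega
  simp [signedExtension, posPoint, hsign, habs]

lemma signedExtension_of_ne_zero (w : Fin d → ℤ) {x : ℤ} (hx : x ≠ 0)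
    (hxd : x.natAbs ≤ d) :
    signedExtension w x = x.sign * w ⟨x.natAbs - 1, by omega⟩ :=
  congrArg (x.sign * ·) (dif_pos _)

lemma abs_signedExtension_le {w : Fin d → ℤ} (hw : w ∈ signedWindows d) (x : ℤ) :
    |signedExtension w x| ≤ d := by
  rcases eq_or_ne x 0 with rfl | hx
  · simp [signedExtension]
  · unfold signedExtension
    split_ifs
    · rw [abs_mul, Int.abs_sign_of_ne_zero hx, one_mul]
      exact (mem_signedWindows.mp hw).1 _
    · simp

lemma signedExtension_injOn {w : Fin d → ℤ} (hw : w ∈ signedWindows d) :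
    Set.InjOn (signedExtension w) {x | x.natAbs ≤ d} := by
  obtain ⟨-, hne, hinj⟩ := mem_signedWindows.mp hw
  have hzero {x : ℤ} (hxd : x.natAbs ≤ d) : signedExtension w x = 0 ↔ x = 0 := by
    refine ⟨fun h => by_contra fun hx => ?_, fun hx => by simp [signedExtension, hx]⟩
    rw [signedExtension_of_ne_zero w hx hxd] at h
    exact mul_ne_zero (Int.sign_eq_zero_iff_zero.not.mpr hx) (hne _) h
  intro x (hxd : x.natAbs ≤ d) y (hyd : y.natAbs ≤ d) h
  rcases eq_or_ne x 0 with rfl | hx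
  · exact ((hzero hyd).mp (h.symm.trans (by simp [signedExtension]))).symm
  rcases eq_or_ne y 0 with rfl | hy
  · exact (hzero hxd).mp (h.trans (by simp [signedExtension]))
  rw [signedExtension_of_ne_zero w hx hxd, signedExtension_of_ne_zero w hy hyd] at h
  have hidx : (⟨x.natAbs - 1, by omega⟩ : Fin d) = ⟨y.natAbs - 1, by omega⟩ := hinj <| by
    simpa [abs_mul, Int.abs_sign_of_ne_zero hx, Int.abs_sign_of_ne_zero hy] using congrArg abs h
  rw [hidx] at h
  have hsign : x.sign = y.sign := mul_right_cancel₀ (hne _) h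
  have hnatAbs : x.natAbs = y.natAbs := by
    have := Fin.mk.inj_iff.mp hidx
    omega
  rw [← Int.sign_mul_natAbs x, ← Int.sign_mul_natAbs y, hsign, hnatAbs]

lemma IsSignedPerm.apply_negPoint {g : Equiv.Perm (IccInt d)} (hg : IsSignedPerm g)
    (x : IccInt d) : (g (negPoint x) : ℤ) = -g x :=
  hg x _ rfl

lemma IsSignedPerm.apply_eq_signedExtension {g : Equiv.Perm (IccInt d)} (hg : IsSignedPerm g)
    (x : IccInt d) : (g x : ℤ) = signedExtension (window g) x := by
  have hpos {y : IccInt d} (hy : 1 ≤ (y : ℤ)) : (g y : ℤ) = signedExtension (window g) y := by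
    obtain ⟨i, rfl⟩ := mem_range_posPoint hy
    exact (signedExtension_posPoint (window g) i).symm
  rcases lt_trichotomy (x : ℤ) 0 with hx | hx | hx
  · have hx' : negPoint (negPoint x) = x := Subtype.ext (neg_neg _)
    conv_lhs => rw [← hx']
    rw [hg.apply_negPoint, hpos (by simp [negPoint]; omega), negPoint, signedExtension_neg,
      neg_neg]
  · have := hg x x (by omega)
    rw [show signedExtension (window g) x = 0 by simp [signedExtension, hx]]
    omega
  · exact hpos hx

lemma IsSignedPerm.eq_of_window_eq {g₁ g₂ : Equiv.Perm (IccInt d)} (hg₁ : IsSignedPerm g₁)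
    (hg₂ : IsSignedPerm g₂) (h : window g₁ = window g₂) : g₁ = g₂ :=
  Equiv.ext fun x => Subtype.ext <| by
    rw [hg₁.apply_eq_signedExtension, hg₂.apply_eq_signedExtension, h]

lemma IsSignedPerm.window_mem_signedWindows {g : Equiv.Perm (IccInt d)} (hg : IsSignedPerm g) :
    window g ∈ signedWindows d := by
  refine mem_signedWindows.mpr ⟨fun i => abs_le.mpr (mem_Icc.mp (g _).2), fun i h => ?_,
    fun i j h => ?_⟩
  · let zero : IccInt d := ⟨0, by simp⟩
    have := hg zero zero rfl
    have := g.injective (Subtype.ext (h.trans (by omega)) : g (posPoint i) = g zero)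
    have := congrArg Subtype.val this
    simp only [posPoint, zero] at this
    omega
  · rcases abs_eq_abs.mp h with h | h
    · exact posPoint_injective (g.injective (Subtype.ext h))
    · rw [window, window, ← hg.apply_negPoint] at h
      have := congrArg Subtype.val (g.injective (Subtype.ext h))
      simp only [posPoint, negPoint] at this
      omega

lemma exists_window_eq {w : Fin d → ℤ} (hw : w ∈ signedWindows d) :
    ∃ g : Equiv.Perm (IccInt d), IsSignedPerm g ∧ window g = w := by
  have hmem (x : IccInt d) : (x : ℤ).natAbs ≤ d := by
    have := mem_Icc.mp x.2
    omega
  let F (x : IccInt d) : IccInt d :=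
    ⟨signedExtension w x, mem_Icc.mpr (abs_le.mp (abs_signedExtension_le hw x))⟩
  have hF : Function.Injective F := fun x y h =>
    Subtype.ext (signedExtension_injOn hw (hmem x) (hmem y) (congrArg Subtype.val h))
  refine ⟨Equiv.ofBijective F (Finite.injective_iff_bijective.mp hF), fun x y hxy => ?_,
    funext (signedExtension_posPoint w)⟩
  change signedExtension w y = -signedExtension w x
  rw [hxy, signedExtension_neg]

end SignedPerm

end Hyperoctahedral

open Classical in
theorem stmt_7_general (d : ℕ) :
    ∑ g : {g : Equiv.Perm (IccInt d) //
        ∀ i j : IccInt d, (j : ℤ) = -(i : ℤ) → ((g j : ℤ)) = -((g i : ℤ))},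
      (X : Polynomial ℤ) ^
        (((Finset.univ.filter (fun p : IccInt d × IccInt d =>
              1 ≤ (p.1 : ℤ) ∧ (p.1 : ℤ) < (p.2 : ℤ) ∧ ((g.1 p.2 : ℤ) < (g.1 p.1 : ℤ)))).card)
          + ((Finset.univ.filter (fun i : IccInt d =>
              1 ≤ (i : ℤ) ∧ (g.1 i : ℤ) < 0)).card)
          + ((Finset.univ.filter (fun p : IccInt d × IccInt d =>
              1 ≤ (p.1 : ℤ) ∧ (p.1 : ℤ) < (p.2 : ℤ) ∧ (g.1 p.1 : ℤ) + (g.1 p.2 : ℤ) < 0)).card))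
      = ∏ k ∈ Finset.range d, ∑ j ∈ Finset.range (2 * (k + 1)), (X : Polynomial ℤ) ^ j := by
  rw [← Hyperoctahedral.sum_pow_invB_signedWindows]
  refine sum_bij (fun g _ => Hyperoctahedral.window g.1)
    (fun g _ => Hyperoctahedral.IsSignedPerm.window_mem_signedWindows g.2)
    (fun g₁ _ g₂ _ h =>
      Subtype.ext (Hyperoctahedral.IsSignedPerm.eq_of_window_eq g₁.2 g₂.2 h))
    (fun w hw => ?_) (fun g _ => by rw [Hyperoctahedral.invB_window])
  obtain ⟨g, hg, rfl⟩ := Hyperoctahedral.exists_window_eq hw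
  exact ⟨⟨g, hg⟩, mem_univ _, rfl⟩

open Classical in
theorem stmt_7 (d : ℕ) (hd : 1 ≤ d) :
    ∑ g : {g : Equiv.Perm (IccInt d) //
        ∀ i j : IccInt d, (j : ℤ) = -(i : ℤ) → ((g j : ℤ)) = -((g i : ℤ))},
      (X : Polynomial ℤ) ^
        (((Finset.univ.filter (fun p : IccInt d × IccInt d =>
              1 ≤ (p.1 : ℤ) ∧ (p.1 : ℤ) < (p.2 : ℤ) ∧ ((g.1 p.2 : ℤ) < (g.1 p.1 : ℤ)))).card)
          + ((Finset.univ.filter (fun i : IccInt d =>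
              1 ≤ (i : ℤ) ∧ (g.1 i : ℤ) < 0)).card)
          + ((Finset.univ.filter (fun p : IccInt d × IccInt d =>
              1 ≤ (p.1 : ℤ) ∧ (p.1 : ℤ) < (p.2 : ℤ) ∧ (g.1 p.1 : ℤ) + (g.1 p.2 : ℤ) < 0)).card))
      = ∏ k ∈ Finset.range d, ∑ j ∈ Finset.range (2 * (k + 1)), (X : Polynomial ℤ) ^ j :=
  stmt_7_general d
end

section
/- Let d ≥ 1 and let g be a bijection of the integer interval [-d..d] with g(-i) = -g(i) for all i. Then inv(g) + #{(i,j) : 1 ≤ i ≤ j ≤ d, g(-i) > g(j)} = (1/2) · #{(i,j) ∈ [1..d] × [-d..d] : (i < j and g(i) > g(j)) or (i > j and g(i) < g(j))}, where inv(g) = #{(i,j) : 1 ≤ i < j ≤ d, g(i) > g(j)}. In particular the cardinality of the set on the right-hand side is even. -/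
/-!
Split the pairs `(i, j)` on the right by the sign of `j`. Those with `j > 0` count every inversion
of `g` on `[1..d]` twice, `(i, 0)` is counted iff `g i < 0`, and, `g` being odd, `(i, -k)` is
counted iff `g i + g k < 0`. That last relation is symmetric in `i, k`, so its count plus its
diagonal (again `g i < 0`) is twice its count over `i ≤ k`, which is the second term on the left.
-/

open Finset

section CardFilter

variable {α : Type*}

lemma card_filter_or_of_imp_not (s : Finset α) (P Q : α → Prop) [DecidablePred P]
    [DecidablePred Q] (h : ∀ a ∈ s, P a → ¬ Q a) :
    #{a ∈ s | P a ∨ Q a} = #{a ∈ s | P a} + #{a ∈ s | Q a} := by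
  classical
  rw [filter_or, card_union_of_disjoint (disjoint_filter.2 h)]

lemma card_filter_product_swap (s : Finset α) (r : α → α → Prop) [DecidableRel r] :
    #{p ∈ s ×ˢ s | r p.2 p.1} = #{p ∈ s ×ˢ s | r p.1 p.2} :=
  card_equiv (Equiv.prodComm α α) (by simp [and_comm])

lemma card_filter_product_diag [DecidableEq α] (s : Finset α) (r : α → α → Prop)
    [DecidableRel r] : #{p ∈ s ×ˢ s | p.1 = p.2 ∧ r p.1 p.2} = #{i ∈ s | r i i} := by
  apply card_nbij' Prod.fst (fun i => (i, i)) <;>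
    simp +contextual [Set.MapsTo, Set.LeftInvOn, Set.RightInvOn, Prod.ext_iff]

lemma card_filter_product_add_card_filter_diag [LinearOrder α] (s : Finset α)
    (r : α → α → Prop) [DecidableRel r] (hr : ∀ i j, r i j → r j i) :
    #{p ∈ s ×ˢ s | r p.1 p.2} + #{i ∈ s | r i i} = 2 * #{p ∈ s ×ˢ s | p.1 ≤ p.2 ∧ r p.1 p.2} := by
  have hle : #{p ∈ s ×ˢ s | p.1 ≤ p.2 ∧ r p.1 p.2}
      = #{p ∈ s ×ˢ s | p.1 < p.2 ∧ r p.1 p.2} + #{i ∈ s | r i i} := by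
    rw [← card_filter_product_diag, ← card_filter_or_of_imp_not _ _ _ fun p _ h h' => h.1.ne h'.1]
    simp only [le_iff_lt_or_eq, or_and_right]
  have hgt : #{p ∈ s ×ˢ s | p.2 < p.1 ∧ r p.1 p.2} = #{p ∈ s ×ˢ s | p.1 < p.2 ∧ r p.1 p.2} := by
    rw [← card_filter_product_swap s (fun i j => i < j ∧ r i j)]
    exact congrArg card <| filter_congr fun p _ => and_congr_right fun _ => ⟨hr _ _, hr _ _⟩
  have hall : #{p ∈ s ×ˢ s | r p.1 p.2}
      = #{p ∈ s ×ˢ s | p.1 ≤ p.2 ∧ r p.1 p.2} + #{p ∈ s ×ˢ s | p.2 < p.1 ∧ r p.1 p.2} := by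
    rw [← card_filter_or_of_imp_not _ _ _ fun p _ h h' => (not_lt.2 h.1) h'.1]
    simp only [← or_and_right, le_or_gt, true_and]
  omega

lemma card_filter_product_inversion_or_swap [LinearOrder α] {β : Type*} [LinearOrder β]
    (s : Finset α) (f : α → β) :
    #{p ∈ s ×ˢ s | (p.1 < p.2 ∧ f p.2 < f p.1) ∨ (p.2 < p.1 ∧ f p.1 < f p.2)}
      = 2 * #{p ∈ s ×ˢ s | p.1 < p.2 ∧ f p.2 < f p.1} := by
  have := card_filter_product_add_card_filter_diag s
    (fun i j => (i < j ∧ f j < f i) ∨ (j < i ∧ f i < f j)) (by grind)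
  simp only [lt_self_iff_false, and_self, or_self, filter_false, card_empty, add_zero] at this
  rw [this]
  exact congrArg (2 * #·) <| filter_congr fun p _ => by grind

end CardFilter

lemma card_filter_Icc_product_Icc_neg (d : ℤ) (Q : ℤ × ℤ → Prop) [DecidablePred Q] :
    #{p ∈ Icc 1 d ×ˢ Icc (-d) d | Q p}
      = #{p ∈ Icc 1 d ×ˢ Icc 1 d | Q (p.1, -p.2)} + #{i ∈ Icc 1 d | Q (i, 0)}
        + #{p ∈ Icc 1 d ×ˢ Icc 1 d | Q p} := by
  have hneg : #{p ∈ Icc 1 d ×ˢ Icc (-d) d | p.2 < 0 ∧ Q p}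
      = #{p ∈ Icc 1 d ×ˢ Icc 1 d | Q (p.1, -p.2)} := by
    apply card_nbij' (fun p => (p.1, -p.2)) (fun p => (p.1, -p.2)) <;>
      simp +contextual [Set.MapsTo, Set.LeftInvOn, Set.RightInvOn] <;> grind
  have hzero : #{p ∈ Icc 1 d ×ˢ Icc (-d) d | p.2 = 0 ∧ Q p} = #{i ∈ Icc 1 d | Q (i, 0)} := by
    apply card_nbij' Prod.fst (fun i => (i, 0)) <;>
      simp +contextual [Set.MapsTo, Set.LeftInvOn, Set.RightInvOn, Prod.ext_iff]
    grind
  have hpos : #{p ∈ Icc 1 d ×ˢ Icc (-d) d | 0 < p.2 ∧ Q p} = #{p ∈ Icc 1 d ×ˢ Icc 1 d | Q p} := by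
    congr 1; ext p; simp only [mem_filter, mem_product, mem_Icc]; grind
  rw [← hneg, ← hzero, ← hpos, ← card_filter_or_of_imp_not _ _ _ (by grind),
    ← card_filter_or_of_imp_not _ _ _ (by grind)]
  congr 1; ext p; simp only [mem_filter]; grind

theorem stmt_10_general (d : ℤ) (g : ℤ → ℤ)
    (hneg : ∀ i ∈ Set.Icc (-d) d, g (-i) = - g i) :
    2 * (((Finset.Icc 1 d ×ˢ Finset.Icc 1 d).filter
            (fun p => p.1 < p.2 ∧ g p.2 < g p.1)).card
         + ((Finset.Icc 1 d ×ˢ Finset.Icc 1 d).filter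
            (fun p => p.1 ≤ p.2 ∧ g p.2 < g (-p.1))).card)
      = ((Finset.Icc 1 d ×ˢ Finset.Icc (-d) d).filter
            (fun p => (p.1 < p.2 ∧ g p.2 < g p.1) ∨ (p.2 < p.1 ∧ g p.1 < g p.2))).card := by
  rw [card_filter_Icc_product_Icc_neg]
  set S := Icc 1 d
  have hodd : ∀ i ∈ S, g (-i) = -g i := fun i hi => hneg i (by grind)
  have hg0 : ∀ i ∈ S, g 0 = 0 := fun i hi => by
    have := hneg 0 (by grind); rw [neg_zero] at this; omega
  have hnegative :
      #{p ∈ S ×ˢ S | (p.1 < -p.2 ∧ g (-p.2) < g p.1) ∨ (-p.2 < p.1 ∧ g p.1 < g (-p.2))}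
        = #{p ∈ S ×ˢ S | g p.1 + g p.2 < 0} :=
    congrArg card <| filter_congr fun p hp => by grind
  have hzero : #{i ∈ S | (i < 0 ∧ g 0 < g i) ∨ (0 < i ∧ g i < g 0)} = #{i ∈ S | g i + g i < 0} :=
    congrArg card <| filter_congr fun i hi => by grind
  have hlower : #{p ∈ S ×ˢ S | p.1 ≤ p.2 ∧ g p.2 < g (-p.1)}
      = #{p ∈ S ×ˢ S | p.1 ≤ p.2 ∧ g p.1 + g p.2 < 0} :=
    congrArg card <| filter_congr fun p hp => by grind
  have hsum := card_filter_product_add_card_filter_diag S (fun i j => g i + g j < 0) (by grind)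
  rw [hnegative, hzero, card_filter_product_inversion_or_swap, hlower]
  omega

/-- For a signed permutation `g` of `[-d..d]`,
`2·(inv(g) + #{(i,j) : 1 ≤ i ≤ j ≤ d, g(-i) > g(j)})` equals the symmetrized
inversion count `#{(i,j) ∈ [1..d]×[-d..d] : (i<j ∧ g(i)>g(j)) ∨ (i>j ∧ g(i)<g(j))}`;
in particular the latter is even. -/
theorem stmt_10 (d : ℤ) (hd : 1 ≤ d) (g : ℤ → ℤ)
    (hbij : Set.BijOn g (Set.Icc (-d) d) (Set.Icc (-d) d))
    (hneg : ∀ i ∈ Set.Icc (-d) d, g (-i) = - g i) :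
    2 * (((Finset.Icc 1 d ×ˢ Finset.Icc 1 d).filter
            (fun p => p.1 < p.2 ∧ g p.2 < g p.1)).card
         + ((Finset.Icc 1 d ×ˢ Finset.Icc 1 d).filter
            (fun p => p.1 ≤ p.2 ∧ g p.2 < g (-p.1))).card)
      = ((Finset.Icc 1 d ×ˢ Finset.Icc (-d) d).filter
            (fun p => (p.1 < p.2 ∧ g p.2 < g p.1) ∨ (p.2 < p.1 ∧ g p.1 < g p.2))).card :=
  stmt_10_general d g hneg
end

section
/- Let d ≥ 1 and let g be a bijection of [-d..d] with g(-i) = -g(i) for all i. Define inv(g) = #{(i,j) : 1 ≤ i < j ≤ d, g(i) > g(j)} and neg(g) = #{i ∈ [1..d] : g(i) < 0}. Then inv(g) + #{(i,j) : 1 ≤ i < j ≤ d, g(-i) > g(j)} = (1/2) · #{(i,j) ∈ [1..d] × [-d..d] : (i < j and g(i) > g(j)) or (i > j and g(i) < g(j))} - neg(g). -/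
/-!
Split the second coordinate `j ∈ [-d..d]` of the symmetrized count by its sign. Pairs with
`j > 0` count the inversions of `g` twice; pairs with `j = 0` are the `i` with `g i < 0`, since
`g 0 = 0`. For `j < 0` we have `j < i`, and oddness turns `g i < g j` into `g i + g (-j) < 0`, a
symmetric condition on `[1..d]²`: its off-diagonal pairs give twice the second inversion count and
its diagonal gives `neg(g)` once more.
-/

open Finset

section

variable {α β : Type*}

theorem card_filter_product_union [DecidableEq α] [DecidableEq β] (s : Finset α) {t u : Finset β}
    (htu : Disjoint t u) (p : α × β → Prop) [DecidablePred p] :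
    #{x ∈ s ×ˢ (t ∪ u) | p x} = #{x ∈ s ×ˢ t | p x} + #{x ∈ s ×ˢ u | p x} := by
  rw [product_union, filter_union,
    card_union_of_disjoint (disjoint_filter_filter (disjoint_product.2 (Or.inr htu)))]

variable [LinearOrder α] (s : Finset α)

theorem card_filter_product_of_symmetric (r : α → α → Prop) [DecidableRel r]
    (hr : ∀ a b, r a b → r b a) :
    #{p ∈ s ×ˢ s | r p.1 p.2} = 2 * #{p ∈ s ×ˢ s | p.1 < p.2 ∧ r p.1 p.2} + #{a ∈ s | r a a} := by
  have hsplit : {p ∈ s ×ˢ s | r p.1 p.2} = ({p ∈ s ×ˢ s | p.1 < p.2 ∧ r p.1 p.2} ∪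
      {p ∈ s ×ˢ s | p.2 < p.1 ∧ r p.1 p.2}) ∪ {p ∈ s ×ˢ s | p.1 = p.2 ∧ r p.1 p.2} := by
    rw [← filter_or, ← filter_or]
    refine filter_congr fun p _ => ?_
    rcases lt_trichotomy p.1 p.2 with h | h | h <;> grind
  have hswap : #{p ∈ s ×ˢ s | p.2 < p.1 ∧ r p.1 p.2} = #{p ∈ s ×ˢ s | p.1 < p.2 ∧ r p.1 p.2} :=
    card_nbij' Prod.swap Prod.swap
      (fun p hp => by
        simp only [coe_filter, mem_product, Set.mem_ofPred_eq, Prod.fst_swap, Prod.snd_swap] at hp ⊢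
        exact ⟨hp.1.symm, hp.2.1, hr _ _ hp.2.2⟩)
      (fun p hp => by
        simp only [coe_filter, mem_product, Set.mem_ofPred_eq, Prod.fst_swap, Prod.snd_swap] at hp ⊢
        exact ⟨hp.1.symm, hp.2.1, hr _ _ hp.2.2⟩)
      (fun p _ => p.swap_swap) (fun p _ => p.swap_swap)
  have hdiag : #{p ∈ s ×ˢ s | p.1 = p.2 ∧ r p.1 p.2} = #{a ∈ s | r a a} :=
    card_nbij' Prod.fst (fun a => (a, a))
      (fun p hp => by
        simp only [coe_filter, mem_product, Set.mem_ofPred_eq] at hp ⊢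
        exact ⟨hp.1.1, hp.2.1 ▸ hp.2.2⟩)
      (fun a ha => by
        simp only [coe_filter, Set.mem_ofPred_eq, mem_product, and_self, true_and] at ha ⊢
        exact ha)
      (fun p hp => by
        simp only [coe_filter, mem_product, Set.mem_ofPred_eq] at hp
        exact Prod.ext rfl hp.2.1)
      (fun a _ => rfl)
  rw [hsplit, card_union_of_disjoint, card_union_of_disjoint, hswap, hdiag, two_mul]
  · exact disjoint_filter.2 fun p _ h₁ h₂ => lt_asymm h₁.1 h₂.1
  · refine disjoint_union_left.2 ⟨?_, ?_⟩
    · exact disjoint_filter.2 fun p _ h₁ h₂ => h₁.1.ne h₂.1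
    · exact disjoint_filter.2 fun p _ h₁ h₂ => h₁.1.ne' h₂.1

theorem card_filter_product_symmetrize (q : α → α → Prop) [DecidableRel q] :
    #{p ∈ s ×ˢ s | (p.1 < p.2 ∧ q p.1 p.2) ∨ (p.2 < p.1 ∧ q p.2 p.1)} =
      2 * #{p ∈ s ×ˢ s | p.1 < p.2 ∧ q p.1 p.2} := by
  rw [card_filter_product_of_symmetric s (fun a b => (a < b ∧ q a b) ∨ (b < a ∧ q b a))
    (fun a b => Or.symm)]
  simp only [lt_irrefl, false_and, or_self, filter_false, card_empty, add_zero]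
  congr 2
  refine filter_congr fun p _ => ?_
  constructor
  · rintro ⟨h, h' | h'⟩
    exacts [h', absurd h'.1 (not_lt_of_gt h)]
  · exact fun h => ⟨h.1, Or.inl h⟩

end

section

variable {d : ℤ} {g : ℤ → ℤ}

theorem card_filter_product_zero (hg : g 0 = 0) :
    #{x ∈ Icc 1 d ×ˢ {0} | (x.1 < x.2 ∧ g x.2 < g x.1) ∨ (x.2 < x.1 ∧ g x.1 < g x.2)} =
      #{i ∈ Icc 1 d | g i < 0} :=
  card_nbij' Prod.fst (fun i => (i, 0))
    (fun ⟨i, j⟩ hx => by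
      simp only [coe_filter, mem_product, mem_Icc, mem_singleton, Set.mem_ofPred_eq] at hx ⊢
      obtain ⟨⟨hi, rfl⟩, hx⟩ := hx
      omega)
    (fun i hi => by
      simp only [coe_filter, mem_product, mem_Icc, mem_singleton, Set.mem_ofPred_eq, and_true]
        at hi ⊢
      omega)
    (fun ⟨i, j⟩ hx => by
      simp only [coe_filter, mem_product, mem_singleton, Set.mem_ofPred_eq] at hx
      rw [hx.1.2])
    (fun i _ => rfl)

theorem card_filter_product_Ico_neg (hodd : ∀ i ∈ Set.Icc (-d) d, g (-i) = -g i) :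
    #{x ∈ Icc 1 d ×ˢ Ico (-d) 0 | (x.1 < x.2 ∧ g x.2 < g x.1) ∨ (x.2 < x.1 ∧ g x.1 < g x.2)} =
      #{x ∈ Icc 1 d ×ˢ Icc 1 d | g x.1 + g x.2 < 0} :=
  card_nbij' (fun x => (x.1, -x.2)) (fun x => (x.1, -x.2))
    (fun ⟨i, j⟩ hx => by
      simp only [coe_filter, mem_product, mem_Icc, mem_Ico, Set.mem_ofPred_eq] at hx ⊢
      have := hodd j ⟨by omega, by omega⟩
      omega)
    (fun ⟨i, j⟩ hx => by
      simp only [coe_filter, mem_product, mem_Icc, mem_Ico, Set.mem_ofPred_eq] at hx ⊢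
      have := hodd j ⟨by omega, by omega⟩
      omega)
    (fun x _ => by simp only [neg_neg]) (fun x _ => by simp only [neg_neg])

theorem card_filter_product_add_lt_zero (hodd : ∀ i ∈ Set.Icc (-d) d, g (-i) = -g i) :
    #{x ∈ Icc 1 d ×ˢ Icc 1 d | g x.1 + g x.2 < 0} =
      2 * #{x ∈ Icc 1 d ×ˢ Icc 1 d | x.1 < x.2 ∧ g x.2 < g (-x.1)} + #{i ∈ Icc 1 d | g i < 0} := by
  have hlt : {x ∈ Icc 1 d ×ˢ Icc 1 d | x.1 < x.2 ∧ g x.1 + g x.2 < 0} =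
      {x ∈ Icc 1 d ×ˢ Icc 1 d | x.1 < x.2 ∧ g x.2 < g (-x.1)} :=
    filter_congr fun x hx => by
      simp only [mem_product, mem_Icc] at hx
      have := hodd x.1 ⟨by omega, by omega⟩
      omega
  have hdiag : {i ∈ Icc 1 d | g i + g i < 0} = {i ∈ Icc 1 d | g i < 0} :=
    filter_congr fun i _ => by omega
  rw [card_filter_product_of_symmetric _ (fun a b => g a + g b < 0) (fun a b h => by omega),
    hlt, hdiag]

end

theorem stmt_11_general (d : ℤ) (hd : 1 ≤ d) (g : ℤ → ℤ)
    (hneg : ∀ i ∈ Set.Icc (-d) d, g (-i) = - g i) :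
    2 * (((Finset.Icc 1 d ×ˢ Finset.Icc 1 d).filter
            (fun p => p.1 < p.2 ∧ g p.2 < g p.1)).card
         + ((Finset.Icc 1 d ×ˢ Finset.Icc 1 d).filter
            (fun p => p.1 < p.2 ∧ g p.2 < g (-p.1))).card)
      + 2 * ((Finset.Icc 1 d).filter (fun i => g i < 0)).card
      = ((Finset.Icc 1 d ×ˢ Finset.Icc (-d) d).filter
            (fun p => (p.1 < p.2 ∧ g p.2 < g p.1) ∨ (p.2 < p.1 ∧ g p.1 < g p.2))).card := by
  have hg0 : g 0 = 0 := by
    have := hneg 0 ⟨by omega, by omega⟩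
    rw [neg_zero] at this
    omega
  have hsplit : Icc (-d) d = Ico (-d) 0 ∪ ({0} ∪ Icc 1 d) := by
    ext i
    simp only [mem_union, mem_Icc, mem_Ico, mem_singleton]
    omega
  have hdisj : Disjoint (Ico (-d) 0) ({0} ∪ Icc 1 d) :=
    disjoint_left.2 fun i hi hi' => by
      simp only [mem_union, mem_Icc, mem_Ico, mem_singleton] at hi hi'
      omega
  rw [hsplit, card_filter_product_union _ hdisj, card_filter_product_union _ (by simp),
    card_filter_product_Ico_neg hneg, card_filter_product_add_lt_zero hneg,
    card_filter_product_zero hg0, card_filter_product_symmetrize _ (fun a b => g b < g a)]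
  ring

/-- For a signed permutation `g` of `[-d..d]`,
`inv(g) + #{(i,j) : 1 ≤ i < j ≤ d, g(-i) > g(j)}` equals
`(1/2)·#{(i,j) ∈ [1..d]×[-d..d] : (i<j ∧ g(i)>g(j)) ∨ (i>j ∧ g(i)<g(j))} - neg(g)`,
stated multiplied through by 2. -/
theorem stmt_11 (d : ℤ) (hd : 1 ≤ d) (g : ℤ → ℤ)
    (hbij : Set.BijOn g (Set.Icc (-d) d) (Set.Icc (-d) d))
    (hneg : ∀ i ∈ Set.Icc (-d) d, g (-i) = - g i) :
    2 * (((Finset.Icc 1 d ×ˢ Finset.Icc 1 d).filter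
            (fun p => p.1 < p.2 ∧ g p.2 < g p.1)).card
         + ((Finset.Icc 1 d ×ˢ Finset.Icc 1 d).filter
            (fun p => p.1 < p.2 ∧ g p.2 < g (-p.1))).card)
      + 2 * ((Finset.Icc 1 d).filter (fun i => g i < 0)).card
      = ((Finset.Icc 1 d ×ˢ Finset.Icc (-d) d).filter
            (fun p => (p.1 < p.2 ∧ g p.2 < g p.1) ∨ (p.2 < p.1 ∧ g p.1 < g p.2))).card :=
  stmt_11_general d hd g hneg
end

section
/- Let D ≥ 1 and let g : ℤ → ℤ be a bijection with g(x + D) = g(x) + D for all x. Let i, j ∈ ℤ with i ≢ j (mod D). Then ⌊|g(i) - g(j)|/D⌋ = #{k ∈ ℤ, k ≥ 1 : g(i) > g(j + kD)} + #{k ∈ ℤ, k ≥ 1 : g(j) > g(i + kD)}. -/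
/-! Periodicity gives `g (x + k * D) = g x + k * D`, so with `a = g i - g j` the two sets are
`{k ≥ 1 : k * D < a}` and `{k ≥ 1 : k * D < -a}`. Injectivity of `g` makes `a ≢ 0 (mod D)`, so
`k * D < ±a` just says `k ≤ ±a / D`; exactly one of `±a` is positive and contributes `|a| / D`. -/

lemma map_add_mul_of_map_add {D : ℤ} {g : ℤ → ℤ} (hper : ∀ x, g (x + D) = g x + D) (k x : ℤ) :
    g (x + k * D) = g x + k * D := by
  have hperiodic : Function.Periodic (fun y => g y - y) D := fun y => by
    simp only [hper]; ring
  have := hperiodic.int_mul k x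
  rw [Int.cast_id] at this
  linarith

lemma not_dvd_map_sub_map_of_map_add {D : ℤ} {g : ℤ → ℤ} (hg : Function.Injective g)
    (hper : ∀ x, g (x + D) = g x + D) {i j : ℤ} (hij : ¬ D ∣ i - j) : ¬ D ∣ g i - g j := by
  rintro ⟨m, hm⟩
  have : g (j + m * D) = g i := by rw [map_add_mul_of_map_add hper]; linarith
  exact hij ⟨m, by rw [← hg this]; ring⟩

lemma Int.setOf_one_le_mul_lt_of_not_dvd {D a : ℤ} (hD : 0 < D) (ha : ¬ D ∣ a) :
    {k : ℤ | 1 ≤ k ∧ k * D < a} = ↑(Finset.Icc 1 (a / D)) := by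
  ext k
  have hne : k * D ≠ a := fun h => ha ⟨k, by rw [← h, mul_comm]⟩
  simp only [Set.mem_ofPred_eq, Finset.coe_Icc, Set.mem_Icc, Int.le_ediv_iff_mul_le hD]
  constructor <;> rintro ⟨h1, h2⟩ <;> exact ⟨h1, by omega⟩

lemma Int.natCard_setOf_one_le_mul_lt_of_not_dvd {D a : ℤ} (hD : 0 < D) (ha : ¬ D ∣ a) :
    (Nat.card {k : ℤ | 1 ≤ k ∧ k * D < a} : ℤ) = (a / D).toNat := by
  rw [Int.setOf_one_le_mul_lt_of_not_dvd hD ha, Nat.card_coe_set_eq, Set.ncard_coe_finset,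
    Int.card_Icc, add_sub_cancel_right]

lemma Int.abs_ediv_eq_toNat_add_toNat {D a : ℤ} (hD : 0 < D) (ha : a ≠ 0) :
    |a| / D = (a / D).toNat + (-a / D).toNat := by
  rcases ha.lt_or_gt with hneg | hpos
  · have h₁ := Int.ediv_neg_of_neg_of_pos hneg hD
    have h₂ := (Int.ediv_nonneg_iff_of_pos hD).mpr (neg_nonneg.mpr hneg.le)
    rw [abs_of_neg hneg]
    omega
  · have h₁ := Int.ediv_neg_of_neg_of_pos (neg_neg_of_pos hpos) hD
    have h₂ := (Int.ediv_nonneg_iff_of_pos hD).mpr hpos.le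
    rw [abs_of_pos hpos]
    omega

/-- For a `D`-periodic bijection `g` of ℤ and `i ≢ j (mod D)`,
`⌊|g(i)-g(j)|/D⌋ = #{k ≥ 1 : g(i) > g(j+kD)} + #{k ≥ 1 : g(j) > g(i+kD)}`. -/
theorem stmt_14 (D : ℤ) (hD : 1 ≤ D) (g : ℤ → ℤ) (hg : Function.Bijective g)
    (hper : ∀ x : ℤ, g (x + D) = g x + D) (i j : ℤ) (hij : ¬ (D ∣ i - j)) :
    |g i - g j| / D
      = (Nat.card {k : ℤ | 1 ≤ k ∧ g (j + k * D) < g i} : ℤ)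
        + (Nat.card {k : ℤ | 1 ≤ k ∧ g (i + k * D) < g j} : ℤ) := by
  have hD₀ : 0 < D := hD
  have ha := not_dvd_map_sub_map_of_map_add hg.injective hper hij
  have hsets : {k : ℤ | 1 ≤ k ∧ g (j + k * D) < g i} = {k | 1 ≤ k ∧ k * D < g i - g j} ∧
      {k : ℤ | 1 ≤ k ∧ g (i + k * D) < g j} = {k | 1 ≤ k ∧ k * D < -(g i - g j)} := by
    simp only [map_add_mul_of_map_add hper]
    constructor <;> ext k <;> simp only [Set.mem_ofPred_eq] <;> omega
  rw [hsets.1, hsets.2, Int.natCard_setOf_one_le_mul_lt_of_not_dvd hD₀ ha,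
    Int.natCard_setOf_one_le_mul_lt_of_not_dvd hD₀ (by rwa [dvd_neg]),
    Int.abs_ediv_eq_toNat_add_toNat hD₀ (by rintro h; exact ha (h ▸ dvd_zero D))]
end

section
/- Let d ≥ 1 and let g : ℤ → ℤ be a bijection satisfying g(i + d) = g(i) + d for all i ∈ ℤ and ∑_{i=1}^{d} g(i) = d(d+1)/2. Then ∑_{1 ≤ i < j ≤ d} |⌊(g(j) - g(i))/d⌋| = (1/2) · #{(i, m) ∈ [1..d] × ℤ : (i < m and g(i) > g(m)) or (i > m and g(i) < g(m))}. -/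
/-! Write every integer uniquely as `r + d * k` with `r ∈ [1, d]`. Since
`g (r + d * k) = g r + d * k`, the pair `(i, r + d * k)` is an inversion exactly when `d * k` lies
strictly between `i - r` and `g i - g r`. The inversion count is thus a sum over `(i, r) ∈ [1, d]²`
of the number of such multiples of `d`. This number is symmetric in `(i, r)` and vanishes on the
diagonal; for `i < r`, where `-d < i - r < 0` and (by injectivity) `d ∤ g i - g r`, it equals
`|⌊(g r - g i) / d⌋|`. -/

open Finset

section BetweenMultiples

variable {d : ℤ}

noncomputable def betweenMultiples (d a b : ℤ) : Finset ℤ :=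
  Icc (a / d + 1) ((b - 1) / d) ∪ Icc (b / d + 1) ((a - 1) / d)

lemma mem_betweenMultiples (hd : 0 < d) {a b k : ℤ} :
    k ∈ betweenMultiples d a b ↔ (a < d * k ∧ d * k < b) ∨ (b < d * k ∧ d * k < a) := by
  have hlow (x : ℤ) : x / d + 1 ≤ k ↔ x < d * k := by
    rw [Int.add_one_le_iff, Int.ediv_lt_iff_lt_mul hd, mul_comm]
  have hupp (x : ℤ) : k ≤ (x - 1) / d ↔ d * k < x := by
    rw [Int.le_ediv_iff_mul_le hd, mul_comm]; omega
  simp only [betweenMultiples, mem_union, mem_Icc, hlow, hupp]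

lemma betweenMultiples_self (hd : 0 < d) (a : ℤ) : betweenMultiples d a a = ∅ := by
  ext k; simp only [mem_betweenMultiples hd, notMem_empty, iff_false]; omega

lemma card_betweenMultiples_neg (hd : 0 < d) (a b : ℤ) :
    (betweenMultiples d (-a) (-b)).card = (betweenMultiples d a b).card :=
  card_nbij' Neg.neg Neg.neg
    (fun k hk => by simp only [mem_coe, mem_betweenMultiples hd] at hk ⊢; grind)
    (fun k hk => by simp only [mem_coe, mem_betweenMultiples hd] at hk ⊢; grind)
    (fun k _ => neg_neg k) (fun k _ => neg_neg k)

lemma card_betweenMultiples_of_neg_of_not_dvd (hd : 0 < d) {a b : ℤ} (ha : -d < a) (ha' : a < 0)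
    (hb : ¬ d ∣ b) : ((betweenMultiples d a b).card : ℤ) = |(-b) / d| := by
  have hq : d * (b / d) < b ∧ b < d * (b / d) + d := by
    have := Int.mul_ediv_add_emod b d
    have := Int.emod_nonneg b hd.ne'
    have := Int.emod_lt_of_pos b hd
    have : b % d ≠ 0 := fun h => hb (Int.dvd_of_emod_eq_zero h)
    omega
  have e1 : a / d = -1 := by rw [Int.ediv_eq_iff_of_pos hd]; omega
  have e2 : (a - 1) / d = -1 := by rw [Int.ediv_eq_iff_of_pos hd]; omega
  have e3 : (b - 1) / d = b / d := by rw [Int.ediv_eq_iff_of_pos hd]; constructor <;> linarith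
  have e4 : (-b) / d = -(b / d) - 1 := by rw [Int.ediv_eq_iff_of_pos hd]; constructor <;> linarith
  rw [betweenMultiples, e1, e2, e3, e4, card_union_of_disjoint (disjoint_left.2 fun k h h' => by
    simp only [mem_Icc] at h h'; omega), Int.card_Icc, Int.card_Icc]
  rcases abs_cases (-(b / d) - 1) with ⟨h, h'⟩ | ⟨h, h'⟩ <;> omega

end BetweenMultiples

lemma apply_add_mul_eq_of_apply_add_eq {d : ℤ} {g : ℤ → ℤ} (hper : ∀ i, g (i + d) = g i + d)
    (i k : ℤ) : g (i + d * k) = g i + d * k := by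
  have hperiodic : Function.Periodic (fun i => g i - i) d := fun i => by
    simp only [hper]; ring
  have := hperiodic.int_mul k i
  simp only [Int.cast_id, mul_comm k d] at this
  linarith

lemma dvd_sub_of_dvd_apply_sub {d : ℤ} {g : ℤ → ℤ} (hg : Function.Injective g)
    (hper : ∀ i k, g (i + d * k) = g i + d * k) {i r : ℤ} (h : d ∣ g i - g r) : d ∣ i - r := by
  obtain ⟨k, hk⟩ := h
  have : r + d * k = i := hg (by rw [hper]; linarith)
  exact ⟨k, by linarith⟩

lemma sum_product_self_eq_two_nsmul {α M : Type*} [LinearOrder α] [AddCommMonoid M]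
    (s : Finset α) (f : α → α → M) (hsymm : ∀ i j, f i j = f j i) (hdiag : ∀ i, f i i = 0) :
    ∑ p ∈ s ×ˢ s, f p.1 p.2 = 2 • ∑ p ∈ s ×ˢ s with p.1 < p.2, f p.1 p.2 := by
  have hgt : ∑ p ∈ s ×ˢ s with ¬ p.1 < p.2, f p.1 p.2 = ∑ p ∈ s ×ˢ s with p.2 < p.1, f p.1 p.2 := by
    refine (sum_subset (fun p => by simp only [mem_filter]; exact fun h => ⟨h.1, h.2.not_gt⟩)
      fun p hp hp' => ?_).symm
    simp only [mem_filter, not_and, not_lt] at hp hp'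
    rw [le_antisymm (hp' hp.1) hp.2, hdiag]
  have hswap : ∑ p ∈ s ×ˢ s with p.2 < p.1, f p.1 p.2 = ∑ p ∈ s ×ˢ s with p.1 < p.2, f p.1 p.2 :=
    sum_nbij' Prod.swap Prod.swap (by simp +contextual) (by simp +contextual)
      (fun _ _ => rfl) (fun _ _ => rfl) (fun p _ => hsymm _ _)
  rw [← sum_filter_add_sum_filter_not _ (fun p => p.1 < p.2), hgt, hswap, two_nsmul]

section Inversions

variable {d : ℤ} {g : ℤ → ℤ}

lemma mem_betweenMultiples_sub_iff (hd : 0 < d) (hper : ∀ i k, g (i + d * k) = g i + d * k)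
    (i r k : ℤ) : k ∈ betweenMultiples d (i - r) (g i - g r) ↔
      (i < r + d * k ∧ g (r + d * k) < g i) ∨ (r + d * k < i ∧ g i < g (r + d * k)) := by
  rw [mem_betweenMultiples hd, hper]; omega

lemma ediv_add_mul_sub_one_eq (hd : 0 < d) {r : ℤ} (hr : r ∈ Icc 1 d) (k : ℤ) :
    (r + d * k - 1) / d = k := by
  rw [mem_Icc] at hr
  rw [Int.ediv_eq_iff_of_pos hd]; constructor <;> linarith [mul_comm d k]

lemma card_inversions_eq_sum (hd : 0 < d) (hper : ∀ i k, g (i + d * k) = g i + d * k) :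
    Nat.card {p : ℤ × ℤ | 1 ≤ p.1 ∧ p.1 ≤ d ∧
        ((p.1 < p.2 ∧ g p.2 < g p.1) ∨ (p.2 < p.1 ∧ g p.1 < g p.2))}
      = ∑ p ∈ Icc 1 d ×ˢ Icc 1 d, (betweenMultiples d (p.1 - p.2) (g p.1 - g p.2)).card := by
  set T := (Icc 1 d ×ˢ Icc 1 d).sigma fun p => betweenMultiples d (p.1 - p.2) (g p.1 - g p.2)
  let φ : (_ : ℤ × ℤ) × ℤ → ℤ × ℤ := fun x => (x.1.1, x.1.2 + d * x.2)
  have hinj : Set.InjOn φ T := by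
    rintro ⟨⟨i, r⟩, k⟩ hx ⟨⟨i', r'⟩, k'⟩ hx' h
    simp only [T, coe_sigma, Set.mem_sigma_iff, mem_coe, mem_product] at hx hx'
    simp only [φ, Prod.mk.injEq] at h
    obtain ⟨rfl, hm⟩ := h
    obtain rfl : k = k' := by
      rw [← ediv_add_mul_sub_one_eq hd hx.1.2 k, ← ediv_add_mul_sub_one_eq hd hx'.1.2 k', hm]
    rw [(add_left_inj _).1 hm]
  have himage : {p : ℤ × ℤ | 1 ≤ p.1 ∧ p.1 ≤ d ∧
      ((p.1 < p.2 ∧ g p.2 < g p.1) ∨ (p.2 < p.1 ∧ g p.1 < g p.2))} = φ '' T := by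
    ext ⟨i, m⟩
    simp only [T, φ, coe_sigma, Set.mem_ofPred_eq, Set.mem_image, Set.mem_sigma_iff, mem_coe,
      mem_product, mem_Icc, mem_betweenMultiples_sub_iff hd hper, Sigma.exists, Prod.exists,
      Prod.mk.injEq]
    constructor
    · rintro ⟨hi1, hid, hinv⟩
      have hm := Int.emod_add_mul_ediv (m - 1) d
      refine ⟨i, (m - 1) % d + 1, (m - 1) / d, ⟨⟨⟨hi1, hid⟩, ?_, ?_⟩, ?_⟩, rfl, by omega⟩
      · have := Int.emod_nonneg (m - 1) hd.ne'; omega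
      · have := Int.emod_lt_of_pos (m - 1) hd; omega
      · rwa [show (m - 1) % d + 1 + d * ((m - 1) / d) = m by omega]
    · rintro ⟨i, r, k, ⟨⟨⟨hi1, hid⟩, -⟩, hinv⟩, rfl, rfl⟩
      exact ⟨hi1, hid, hinv⟩
  rw [himage, Nat.card_coe_set_eq, hinj.ncard_image, Set.ncard_coe_finset, card_sigma]

end Inversions

theorem stmt_15_general (d : ℤ) (hd : 1 ≤ d) (g : ℤ → ℤ) (hg : Function.Bijective g)
    (hper : ∀ i : ℤ, g (i + d) = g i + d) :
    2 * ∑ p ∈ (Finset.Icc 1 d ×ˢ Finset.Icc 1 d).filter (fun p => p.1 < p.2),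
          |(g p.2 - g p.1) / d|
      = (Nat.card {p : ℤ × ℤ | 1 ≤ p.1 ∧ p.1 ≤ d ∧
          ((p.1 < p.2 ∧ g p.2 < g p.1) ∨ (p.2 < p.1 ∧ g p.1 < g p.2))} : ℤ) := by
  have hd0 : 0 < d := by omega
  have hperk := apply_add_mul_eq_of_apply_add_eq hper
  have hpair : ∀ p ∈ (Icc 1 d ×ˢ Icc 1 d).filter (fun p => p.1 < p.2),
      |(g p.2 - g p.1) / d| = ((betweenMultiples d (p.1 - p.2) (g p.1 - g p.2)).card : ℤ) := by
    intro p hp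
    simp only [mem_filter, mem_product, mem_Icc] at hp
    have hndvd : ¬ d ∣ g p.1 - g p.2 := fun h => by
      have := Int.eq_zero_of_abs_lt_dvd (dvd_sub_of_dvd_apply_sub hg.injective hperk h)
        (abs_sub_lt_iff.2 ⟨by omega, by omega⟩)
      omega
    rw [card_betweenMultiples_of_neg_of_not_dvd hd0 (by omega) (by omega) hndvd, neg_sub]
  rw [sum_congr rfl hpair, card_inversions_eq_sum hd0 hperk, Nat.cast_sum,
    sum_product_self_eq_two_nsmul _ (fun i r => ((betweenMultiples d (i - r) (g i - g r)).card : ℤ))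
      (fun i r => by rw [← card_betweenMultiples_neg hd0, neg_sub, neg_sub])
      (fun i => by rw [sub_self, sub_self, betweenMultiples_self hd0, card_empty, Nat.cast_zero]),
    two_nsmul, two_mul]

/-- Length formula for the affine symmetric group:
`∑_{1 ≤ i < j ≤ d} |⌊(g(j)-g(i))/d⌋|` equals half of the symmetrized affine
inversion count of `g` over `[1..d] × ℤ` (stated multiplied through by 2). -/
theorem stmt_15 (d : ℤ) (hd : 1 ≤ d) (g : ℤ → ℤ) (hg : Function.Bijective g)
    (hper : ∀ i : ℤ, g (i + d) = g i + d)
    (hsum : 2 * ∑ i ∈ Finset.Icc 1 d, g i = d * (d + 1)) :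
    2 * ∑ p ∈ (Finset.Icc 1 d ×ˢ Finset.Icc 1 d).filter (fun p => p.1 < p.2),
          |(g p.2 - g p.1) / d|
      = (Nat.card {p : ℤ × ℤ | 1 ≤ p.1 ∧ p.1 ≤ d ∧
          ((p.1 < p.2 ∧ g p.2 < g p.1) ∨ (p.2 < p.1 ∧ g p.1 < g p.2))} : ℤ) :=
  stmt_15_general d hd g hg hper
end
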